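/- The map E_C sending each node of an NSMB-unprovable nested-sequent Γ ⇒ Δ, T to the corresponding node of its saturation is an embedding of Γ ⇒ Δ, T into the canonical model (S_C, R_C, P_C, V_C): if a node n₂ is a child of n₁ via [·]^c_α then α ≤ R_C(E_C(n₁),E_C(n₂)), and if via [·]^o_α then α < R_C(E_C(n₁),E_C(n₂)). -/
import Mathlib


set_option maxHeartbeats 1000000

namespace MBQL

/-- The fixed finite set `J ⊆ [0,1]` of inner-product values, with `0, 1 ∈ J`. -/
structure MBParams where
  J : Set ℝ
  finite : J.Finite
  subI : J ⊆ Set.Icc (0:ℝ) 1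
  zero_mem : (0:ℝ) ∈ J
  one_mem : (1:ℝ) ∈ J

/-- Formulas of **MB**: `A ::= p | ⊤ | ⊥ | ¬A | A∧A | □^c_α A | □^o_α A` (α ∈ J). -/
inductive MBForm (Pm : MBParams) : Type
  | var : ℕ → MBForm Pm
  | top : MBForm Pm
  | bot : MBForm Pm
  | neg : MBForm Pm → MBForm Pm
  | conj : MBForm Pm → MBForm Pm → MBForm Pm
  | boxc : Pm.J → MBForm Pm → MBForm Pm
  | boxo : Pm.J → MBForm Pm → MBForm Pm

noncomputable instance {Pm : MBParams} : DecidableEq (MBForm Pm) := Classical.decEq _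

/-- Valuation of a formula, given worlds `S`, a relation `R : S → S → ℝ` and a
valuation `V` of the propositional variables. -/
def MBForm.valR {Pm : MBParams} {S : Type} (R : S → S → ℝ) (V : ℕ → Set S) :
    MBForm Pm → Set S
  | .var n => V n
  | .top => Set.univ
  | .bot => ∅
  | .neg A => (A.valR R V)ᶜ
  | .conj A B => A.valR R V ∩ B.valR R V
  | .boxc α A => {s | ∀ t, (α : ℝ) ≤ R s t → t ∈ A.valR R V}
  | .boxo α A => {s | ∀ t, (α : ℝ) < R s t → t ∈ A.valR R V}

/-- An EQL-frame. -/
structure EQLFrame where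
  S : Type
  nonempty : Nonempty S
  R : S → S → ℝ
  mem_Icc : ∀ s t, R s t ∈ Set.Icc (0:ℝ) 1
  eq_one_iff : ∀ s t, (R s t = 1 ↔ s = t)
  symm : ∀ s t, R s t = R t s

/-- An MB-realization. -/
structure MBRealization (Pm : MBParams) where
  F : EQLFrame
  P : Set (Set F.S)
  univ_mem : Set.univ ∈ P
  empty_mem : ∅ ∈ P
  inter_mem : ∀ X ∈ P, ∀ Y ∈ P, X ∩ Y ∈ P
  compl_mem : ∀ X ∈ P, Xᶜ ∈ P
  boxc_mem : ∀ α ∈ Pm.J, ∀ X ∈ P, {s | ∀ t, α ≤ F.R s t → t ∈ X} ∈ P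
  boxo_mem : ∀ α ∈ Pm.J, ∀ X ∈ P, {s | ∀ t, α < F.R s t → t ∈ X} ∈ P
  V : ℕ → Set F.S
  V_mem : ∀ n, V n ∈ P

/-- The extended valuation of a formula in an MB-realization. -/
def MBRealization.val {Pm : MBParams} (M : MBRealization Pm) (A : MBForm Pm) :
    Set M.F.S := A.valR M.F.R M.V

/-- Validity of an MB-formula. -/
def MBValid {Pm : MBParams} (A : MBForm Pm) : Prop :=
  ∀ (M : MBRealization Pm) (s : M.F.S), s ∈ M.val A

inductive Side : Type
  | c : Side
  | o : Side
deriving DecidableEq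

/-- A label `(α, d)` on a modal bracket, with `α ∈ J − {1}`. -/
structure MBLab (Pm : MBParams) where
  α : ℝ
  memJ : α ∈ Pm.J
  ne_one : α ≠ 1
  d : Side

mutual
/-- Nested-sequents: a finite tree whose nodes are sequents (pairs of finite
sets of formulas) and whose edges carry labels. -/
inductive NSeq (Pm : MBParams) : Type
  | node : Finset (MBForm Pm) → Finset (MBForm Pm) → NSeqs Pm → NSeq Pm
/-- A finite list of labelled child nested-sequents. -/
inductive NSeqs (Pm : MBParams) : Type
  | nil : NSeqs Pm
  | cons : MBLab Pm → NSeq Pm → NSeqs Pm → NSeqs Pm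
end

/-- The `i`-th labelled child. -/
def NSeqs.get {Pm : MBParams} : NSeqs Pm → ℕ → Option (MBLab Pm × NSeq Pm)
  | .nil, _ => none
  | .cons l t _, 0 => some (l, t)
  | .cons _ _ ts, n+1 => ts.get n

/-- `SubAt t p u`: the subtree of `t` at the path (node address) `p` is `u`. -/
inductive SubAt {Pm : MBParams} : NSeq Pm → List ℕ → NSeq Pm → Prop
  | here (t : NSeq Pm) : SubAt t [] t
  | there {Γ Δ : Finset (MBForm Pm)} {ts : NSeqs Pm} {i : ℕ} {l : MBLab Pm}
      {u v : NSeq Pm} {p : List ℕ} :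
      NSeqs.get ts i = some (l, u) → SubAt u p v → SubAt (.node Γ Δ ts) (i :: p) v

/-- `p` is (the address of) a node of `t`. -/
def IsNode {Pm : MBParams} (t : NSeq Pm) (p : List ℕ) : Prop := ∃ u, SubAt t p u

mutual
/-- Replace the sequent at the node with address `p` by `Γ' ⇒ Δ'`
(children are kept). -/
def NSeq.setSeq {Pm : MBParams} :
    NSeq Pm → List ℕ → Finset (MBForm Pm) → Finset (MBForm Pm) → NSeq Pm
  | .node _ _ ts, [], Γ', Δ' => .node Γ' Δ' ts
  | .node Γ Δ ts, i :: p, Γ', Δ' => .node Γ Δ (NSeqs.setSeqs ts i p Γ' Δ')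
def NSeqs.setSeqs {Pm : MBParams} :
    NSeqs Pm → ℕ → List ℕ → Finset (MBForm Pm) → Finset (MBForm Pm) → NSeqs Pm
  | .nil, _, _, _, _ => .nil
  | .cons l t ts, 0, p, Γ', Δ' => .cons l (t.setSeq p Γ' Δ') ts
  | .cons l t ts, n+1, p, Γ', Δ' => .cons l t (NSeqs.setSeqs ts n p Γ' Δ')
end

/-- Append a labelled child at the end of a children list. -/
def NSeqs.snoc {Pm : MBParams} : NSeqs Pm → MBLab Pm → NSeq Pm → NSeqs Pm
  | .nil, l, u => .cons l u .nil
  | .cons l' t ts, l, u => .cons l' t (ts.snoc l u)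

mutual
/-- Add a new child `[u]_l` at the node with address `p`. -/
def NSeq.addChild {Pm : MBParams} : NSeq Pm → List ℕ → MBLab Pm → NSeq Pm → NSeq Pm
  | .node Γ Δ ts, [], l, u => .node Γ Δ (ts.snoc l u)
  | .node Γ Δ ts, i :: p, l, u => .node Γ Δ (NSeqs.addChilds ts i p l u)
def NSeqs.addChilds {Pm : MBParams} : NSeqs Pm → ℕ → List ℕ → MBLab Pm → NSeq Pm → NSeqs Pm
  | .nil, _, _, _, _ => .nil
  | .cons l' t ts, 0, p, l, u => .cons l' (t.addChild p l u) ts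
  | .cons l' t ts, n+1, p, l, u => .cons l' t (NSeqs.addChilds ts n p l u)
end


/-- Logical connectives defined by abbreviation: `A ∨ B`. -/
def MBForm.or {Pm : MBParams} (A B : MBForm Pm) : MBForm Pm := .neg (.conj (.neg A) (.neg B))

/-- `A → B := ¬A ∨ B`. -/
def MBForm.imp {Pm : MBParams} (A B : MBForm Pm) : MBForm Pm := (MBForm.neg A).or B

/-- Conjunction of a list of formulas. -/
def conjList {Pm : MBParams} : List (MBForm Pm) → MBForm Pm
  | [] => .top
  | [A] => A
  | A :: B :: rest => .conj A (conjList (B :: rest))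

/-- Disjunction of a list of formulas. -/
def disjList {Pm : MBParams} : List (MBForm Pm) → MBForm Pm
  | [] => .bot
  | [A] => A
  | A :: B :: rest => (A).or (disjList (B :: rest))

/-- `⋀Γ → ⋁Δ`. -/
noncomputable def seqForm {Pm : MBParams} (Γ Δ : Finset (MBForm Pm)) : MBForm Pm :=
  (conjList Γ.toList).imp (disjList Δ.toList)

/-- The box corresponding to a bracket label. -/
def MBLab.box {Pm : MBParams} (l : MBLab Pm) (A : MBForm Pm) : MBForm Pm :=
  match l.d with
  | .c => .boxc ⟨l.α, l.memJ⟩ A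
  | .o => .boxo ⟨l.α, l.memJ⟩ A

mutual
/-- The interpretation `τ` of a nested-sequent as a formula. -/
noncomputable def NSeq.tau {Pm : MBParams} : NSeq Pm → MBForm Pm
  | .node Γ Δ ts => NSeqs.tauAux (seqForm Γ Δ) ts
noncomputable def NSeqs.tauAux {Pm : MBParams} : MBForm Pm → NSeqs Pm → MBForm Pm
  | A, .nil => A
  | A, .cons l t ts => NSeqs.tauAux (A.or (l.box t.tau)) ts
end

/-- `E` is an embedding of the nested-sequent `t` into the realization `M`
(`E` is given on node addresses). -/
def IsEmb {Pm : MBParams} (M : MBRealization Pm) (t : NSeq Pm)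
    (E : List ℕ → M.F.S) : Prop :=
  ∀ p Γ Δ ts i l u, SubAt t p (.node Γ Δ ts) → NSeqs.get ts i = some (l, u) →
    (l.d = Side.c → l.α ≤ M.F.R (E p) (E (p ++ [i]))) ∧
    (l.d = Side.o → l.α < M.F.R (E p) (E (p ++ [i])))

/-- The nested-sequent `t` is false in `M` under `E`. -/
def FalseUnder {Pm : MBParams} (M : MBRealization Pm) (t : NSeq Pm)
    (E : List ℕ → M.F.S) : Prop :=
  ∀ p Γ Δ ts, SubAt t p (.node Γ Δ ts) →
    (∀ A ∈ Γ, E p ∈ M.val A) ∧ (∀ A ∈ Δ, E p ∉ M.val A)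

/-- Validity of a nested-sequent: it is not false under any embedding into
any MB-realization. -/
def NSValid {Pm : MBParams} (t : NSeq Pm) : Prop :=
  ∀ (M : MBRealization Pm) (E : List ℕ → M.F.S), IsEmb M t E → ¬ FalseUnder M t E


/-- `□^d_α A`. -/
def mkBox {Pm : MBParams} (d : Side) (α : Pm.J) (A : MBForm Pm) : MBForm Pm :=
  match d with
  | .c => .boxc α A
  | .o => .boxo α A

/-- The total order `⪯` on `I × {c,o}`: `pleq α d β d'` means `(α,d) ⪯ (β,d')`. -/
def pleq : ℝ → Side → ℝ → Side → Prop
  | α, .o, β, .c => α < β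
  | α, _, β, _ => α ≤ β

/-- Provability in the nested-sequent calculus **NSMB**.  The boolean
parameter records whether the rule (cut) may be used. -/
inductive Provable {Pm : MBParams} : Bool → NSeq Pm → Prop
  /-- axiom `‖A, Γ ⇒ Δ, A, T‖` -/
  | axId {cut : Bool} {t : NSeq Pm} {p Γ Δ ts A} :
      SubAt t p (.node Γ Δ ts) → A ∈ Γ → A ∈ Δ → Provable cut t
  /-- axiom `‖Γ ⇒ Δ, ⊤, T‖` -/
  | axTop {cut : Bool} {t : NSeq Pm} {p Γ Δ ts} :
      SubAt t p (.node Γ Δ ts) → MBForm.top ∈ Δ → Provable cut t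
  /-- axiom `‖⊥, Γ ⇒ Δ, T‖` -/
  | axBot {cut : Bool} {t : NSeq Pm} {p Γ Δ ts} :
      SubAt t p (.node Γ Δ ts) → MBForm.bot ∈ Γ → Provable cut t
  /-- axiom `‖Γ ⇒ Δ, □^o_1 A, T‖` -/
  | axBoxO1 {cut : Bool} {t : NSeq Pm} {p Γ Δ ts A} :
      SubAt t p (.node Γ Δ ts) → MBForm.boxo ⟨1, Pm.one_mem⟩ A ∈ Δ → Provable cut t
  /-- rule (cut) -/
  | cutR {t : NSeq Pm} {p Γ Δ ts A} :
      SubAt t p (.node Γ Δ ts) →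
      Provable true (t.setSeq p Γ (insert A Δ)) →
      Provable true (t.setSeq p (insert A Γ) Δ) →
      Provable true t
  /-- rule (wL) -/
  | wL {cut : Bool} {t : NSeq Pm} {p Γ Δ ts A} :
      SubAt t p (.node Γ Δ ts) → Provable cut t →
      Provable cut (t.setSeq p (insert A Γ) Δ)
  /-- rule (wR) -/
  | wR {cut : Bool} {t : NSeq Pm} {p Γ Δ ts A} :
      SubAt t p (.node Γ Δ ts) → Provable cut t →
      Provable cut (t.setSeq p Γ (insert A Δ))
  /-- rule (¬L) -/
  | negL {cut : Bool} {t : NSeq Pm} {p Γ Δ ts A} :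
      SubAt t p (.node Γ Δ ts) →
      Provable cut (t.setSeq p Γ (insert A Δ)) →
      Provable cut (t.setSeq p (insert (MBForm.neg A) Γ) Δ)
  /-- rule (¬R) -/
  | negR {cut : Bool} {t : NSeq Pm} {p Γ Δ ts A} :
      SubAt t p (.node Γ Δ ts) →
      Provable cut (t.setSeq p (insert A Γ) Δ) →
      Provable cut (t.setSeq p Γ (insert (MBForm.neg A) Δ))
  /-- rule (∧L) -/
  | andL {cut : Bool} {t : NSeq Pm} {p Γ Δ ts A B} :
      SubAt t p (.node Γ Δ ts) →
      Provable cut (t.setSeq p (insert A (insert B Γ)) Δ) →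
      Provable cut (t.setSeq p (insert (MBForm.conj A B) Γ) Δ)
  /-- rule (∧R) -/
  | andR {cut : Bool} {t : NSeq Pm} {p Γ Δ ts A B} :
      SubAt t p (.node Γ Δ ts) →
      Provable cut (t.setSeq p Γ (insert A Δ)) →
      Provable cut (t.setSeq p Γ (insert B Δ)) →
      Provable cut (t.setSeq p Γ (insert (MBForm.conj A B) Δ))
  /-- rule (□L), with side condition `(α,d) ⪯ (β,d')` -/
  | boxL {cut : Bool} {t : NSeq Pm} {p Γ Δ ts i l u Γ' Δ' ts' A} {α : Pm.J} {d : Side} :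
      SubAt t p (.node Γ Δ ts) → NSeqs.get ts i = some (l, u) →
      SubAt t (p ++ [i]) (.node Γ' Δ' ts') →
      pleq (α : ℝ) d l.α l.d →
      Provable cut (t.setSeq (p ++ [i]) (insert A Γ') Δ') →
      Provable cut (t.setSeq p (insert (mkBox d α A) Γ) Δ)
  /-- rule (□L sym), with side condition `(α,d) ⪯ (β,d')` -/
  | boxLsym {cut : Bool} {t : NSeq Pm} {p Γ Δ ts i l u Γ' Δ' ts' A} {α : Pm.J} {d : Side} :
      SubAt t p (.node Γ Δ ts) → NSeqs.get ts i = some (l, u) →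
      SubAt t (p ++ [i]) (.node Γ' Δ' ts') →
      pleq (α : ℝ) d l.α l.d →
      Provable cut (t.setSeq p (insert A Γ) Δ) →
      Provable cut (t.setSeq (p ++ [i]) (insert (mkBox d α A) Γ') Δ')
  /-- rule (□L self), with side condition `(α,d) ≠ (1,o)` -/
  | boxLself {cut : Bool} {t : NSeq Pm} {p Γ Δ ts A} {α : Pm.J} {d : Side} :
      SubAt t p (.node Γ Δ ts) → ¬((α : ℝ) = 1 ∧ d = Side.o) →
      Provable cut (t.setSeq p (insert A Γ) Δ) →
      Provable cut (t.setSeq p (insert (mkBox d α A) Γ) Δ)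
  /-- rule (□^c_0): erase `A` from the left of one node and add `□^c_0 A`
  to the left of another arbitrary node -/
  | boxC0 {cut : Bool} {t : NSeq Pm} {p Γ Δ ts q Γ'' Δ'' ts'' A} :
      SubAt t p (.node Γ Δ ts) → SubAt t q (.node Γ'' Δ'' ts'') →
      Provable cut (t.setSeq p (insert A Γ) Δ) →
      Provable cut (t.setSeq q (insert (MBForm.boxc ⟨0, Pm.zero_mem⟩ A) Γ'') Δ'')
  /-- rule (□R) -/
  | boxR {cut : Bool} {t : NSeq Pm} {p Γ Δ ts A} {l : MBLab Pm} :
      SubAt t p (.node Γ Δ ts) →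
      Provable cut (t.addChild p l (.node ∅ {A} .nil)) →
      Provable cut (t.setSeq p Γ (insert (l.box A) Δ))
  /-- rule (□R self) -/
  | boxRself {cut : Bool} {t : NSeq Pm} {p Γ Δ ts A} :
      SubAt t p (.node Γ Δ ts) →
      Provable cut (t.setSeq p Γ (insert A Δ)) →
      Provable cut (t.setSeq p Γ (insert (MBForm.boxc ⟨1, Pm.one_mem⟩ A) Δ))


/-- The subformula relation. -/
inductive Subf {Pm : MBParams} : MBForm Pm → MBForm Pm → Prop
  | refl (A : MBForm Pm) : Subf A A
  | negS {A B : MBForm Pm} : Subf A B → Subf A (.neg B)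
  | conjL {A B C : MBForm Pm} : Subf A B → Subf A (.conj B C)
  | conjR {A B C : MBForm Pm} : Subf A C → Subf A (.conj B C)
  | boxcS {A B : MBForm Pm} {α : Pm.J} : Subf A B → Subf A (.boxc α B)
  | boxoS {A B : MBForm Pm} {α : Pm.J} : Subf A B → Subf A (.boxo α B)

/-- `A` occurs in (some sequent of) the nested-sequent `t`. -/
def OccursIn {Pm : MBParams} (A : MBForm Pm) (t : NSeq Pm) : Prop :=
  ∃ p Γ Δ ts, SubAt t p (.node Γ Δ ts) ∧ (A ∈ Γ ∨ A ∈ Δ)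

/-- One step of the saturation procedure used to build `Γ_C ⇒ Δ_C, T_C`.
The state is a nested-sequent together with the set of (address, formula)
occurrences of right-hand boxed formulas that have already been processed by
step (8). -/
inductive SatStep {Pm : MBParams} :
    NSeq Pm × Set (List ℕ × MBForm Pm) → NSeq Pm × Set (List ℕ × MBForm Pm) → Prop
  /-- step (1): `A ∧ B` on the left -/
  | andL {t D p Γ Δ ts A B} :
      SubAt t p (.node Γ Δ ts) → MBForm.conj A B ∈ Γ →
      SatStep (t, D) (t.setSeq p (insert A (insert B Γ)) Δ, D)
  /-- step (2): `A ∧ B` on the right; the disjunct keeping unprovability is adopted -/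
  | andR {t D p Γ Δ ts A B C} :
      SubAt t p (.node Γ Δ ts) → MBForm.conj A B ∈ Δ → (C = A ∨ C = B) →
      ¬ Provable true (t.setSeq p Γ (insert C Δ)) →
      SatStep (t, D) (t.setSeq p Γ (insert C Δ), D)
  /-- step (3): `¬A` on the left -/
  | negL {t D p Γ Δ ts A} :
      SubAt t p (.node Γ Δ ts) → MBForm.neg A ∈ Γ →
      SatStep (t, D) (t.setSeq p Γ (insert A Δ), D)
  /-- step (4): `¬A` on the right -/
  | negR {t D p Γ Δ ts A} :
      SubAt t p (.node Γ Δ ts) → MBForm.neg A ∈ Δ →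
      SatStep (t, D) (t.setSeq p (insert A Γ) Δ, D)
  /-- step (5): `□^d_α A` on the left of the parent of a bracket with `(α,d) ⪯ (β,d')` -/
  | boxL {t D p Γ Δ ts i l u Γ' Δ' ts' A} {α : Pm.J} {d : Side} :
      SubAt t p (.node Γ Δ ts) → NSeqs.get ts i = some (l, u) →
      SubAt t (p ++ [i]) (.node Γ' Δ' ts') →
      pleq (α : ℝ) d l.α l.d → mkBox d α A ∈ Γ →
      SatStep (t, D) (t.setSeq (p ++ [i]) (insert A Γ') Δ', D)
  /-- step (6): `□^d_α A` on the left of the child of a bracket with `(α,d) ⪯ (β,d')` -/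
  | boxLsym {t D p Γ Δ ts i l u Γ' Δ' ts' A} {α : Pm.J} {d : Side} :
      SubAt t p (.node Γ Δ ts) → NSeqs.get ts i = some (l, u) →
      SubAt t (p ++ [i]) (.node Γ' Δ' ts') →
      pleq (α : ℝ) d l.α l.d → mkBox d α A ∈ Γ' →
      SatStep (t, D) (t.setSeq p (insert A Γ) Δ, D)
  /-- step (7): `□^d_α A` on the left, `(α,d) ≠ (1,o)` -/
  | boxLself {t D p Γ Δ ts A} {α : Pm.J} {d : Side} :
      SubAt t p (.node Γ Δ ts) → ¬((α : ℝ) = 1 ∧ d = Side.o) → mkBox d α A ∈ Γ →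
      SatStep (t, D) (t.setSeq p (insert A Γ) Δ, D)
  /-- step (8): `□^d_α A` on the right (`α ≠ 1`), performed once per occurrence -/
  | boxR {t D p Γ Δ ts A} {α : Pm.J} {d : Side} (hne : (α : ℝ) ≠ 1) :
      SubAt t p (.node Γ Δ ts) → mkBox d α A ∈ Δ → (p, mkBox d α A) ∉ D →
      SatStep (t, D)
        (t.addChild p ⟨(α : ℝ), α.2, hne, d⟩ (.node ∅ {A} .nil),
         insert (p, mkBox d α A) D)
  /-- step (9): `□^c_1 A` on the right -/
  | boxRself {t D p Γ Δ ts A} :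
      SubAt t p (.node Γ Δ ts) → MBForm.boxc ⟨1, Pm.one_mem⟩ A ∈ Δ →
      SatStep (t, D) (t.setSeq p Γ (insert A Δ), D)
  /-- step (10): `□^c_0 A` on the left of some node: add `A` to the left of any node -/
  | boxC0 {t D p Γ Δ ts q Γ'' Δ'' ts'' A} :
      SubAt t p (.node Γ Δ ts) → MBForm.boxc ⟨0, Pm.zero_mem⟩ A ∈ Γ →
      SubAt t q (.node Γ'' Δ'' ts'') →
      SatStep (t, D) (t.setSeq q (insert A Γ'') Δ'', D)

/-- A state of the saturation procedure is saturated (terminal) when no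
saturation step changes it any more. -/
def Saturated {Pm : MBParams} (s : NSeq Pm × Set (List ℕ × MBForm Pm)) : Prop :=
  ∀ s', SatStep s s' → s' = s


mutual
/-- The subtree of `t` at address `p`, as a function. -/
def NSeq.sub? {Pm : MBParams} : NSeq Pm → List ℕ → Option (NSeq Pm)
  | t, [] => some t
  | .node _ _ ts, i :: p => NSeqs.subs? ts i p
def NSeqs.subs? {Pm : MBParams} : NSeqs Pm → ℕ → List ℕ → Option (NSeq Pm)
  | .nil, _, _ => none
  | .cons _ t _, 0, p => t.sub? p
  | .cons _ _ ts, n+1, p => NSeqs.subs? ts n p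
end

/-- The label of the edge from the node at address `p` to its `i`-th child. -/
def labelAt {Pm : MBParams} (t : NSeq Pm) (p : List ℕ) (i : ℕ) : Option (MBLab Pm) :=
  match t.sub? p with
  | some (.node _ _ ts) => (NSeqs.get ts i).map Prod.fst
  | none => none

/-- The set of elements of `J` appearing in a formula. -/
def MBForm.jsetF {Pm : MBParams} : MBForm Pm → Set ℝ
  | .var _ => ∅
  | .top => ∅
  | .bot => ∅
  | .neg A => A.jsetF
  | .conj A B => A.jsetF ∪ B.jsetF
  | .boxc α A => insert (α : ℝ) A.jsetF
  | .boxo α A => insert (α : ℝ) A.jsetF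

mutual
/-- The numbers appearing in a nested-sequent (in formulas or brackets). -/
def NSeq.jsetT {Pm : MBParams} : NSeq Pm → Set ℝ
  | .node Γ Δ ts =>
      (⋃ A ∈ Γ, MBForm.jsetF A) ∪ (⋃ A ∈ Δ, MBForm.jsetF A) ∪ NSeqs.jsetTs ts
def NSeqs.jsetTs {Pm : MBParams} : NSeqs Pm → Set ℝ
  | .nil => ∅
  | .cons l t ts => insert l.α (t.jsetT ∪ NSeqs.jsetTs ts)
end

/-- `(Γ ⇒ Δ, T)_J`: the numbers appearing in the nested-sequent, with `0` and `1`. -/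
def jset {Pm : MBParams} (t : NSeq Pm) : Set ℝ :=
  insert (0:ℝ) (insert (1:ℝ) t.jsetT)

/-- `U` is an interpolated set of `Js`. -/
def Interpolated (Js U : Set ℝ) : Prop :=
  U.Finite ∧ U ⊆ Set.Icc (0:ℝ) 1 ∧ Js ⊆ U ∧
    ∀ α ∈ Js, ∀ β ∈ Js, α < β → (∀ γ ∈ Js, ¬ (α < γ ∧ γ < β)) →
      ∃! δ, δ ∈ U ∧ α < δ ∧ δ < β

/-- `Suc U α`: the successor of `α` in the interpolated set `U` (with `Suc 1 = 1`). -/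
noncomputable def Suc (U : Set ℝ) (α : ℝ) : ℝ := sInf ((U ∩ Set.Ioi α) ∪ {1})

/-- Auxiliary value of the canonical relation in case `q` is the child of `p`
via a bracket (`β` for `[·]^c_β`, `Suc β` for `[·]^o_β`), and `0` otherwise. -/
noncomputable def lval {Pm : MBParams} (t : NSeq Pm) (U : Set ℝ) (p q : List ℕ) : ℝ :=
  match q.getLast? with
  | none => 0
  | some i =>
      if q.dropLast = p then
        match labelAt t p i with
        | some l => (match l.d with | Side.c => l.α | Side.o => Suc U l.α)
        | none => 0
      else 0

/-- The canonical relation `R_C` (on node addresses). -/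
noncomputable def RC {Pm : MBParams} (t : NSeq Pm) (U : Set ℝ) (p q : List ℕ) : ℝ :=
  if p = q then 1 else max (lval t U p q) (lval t U q p)

/-- The worlds of the canonical model: the nodes of the saturated nested-sequent. -/
def World {Pm : MBParams} (t : NSeq Pm) : Type := {p : List ℕ // IsNode t p}

/-- The canonical relation `R_C`, as a function on the worlds. -/
noncomputable def RCW {Pm : MBParams} (t : NSeq Pm) (U : Set ℝ) (p q : World t) : ℝ :=
  RC t U p.val q.val

/-- The canonical valuation `V_C` of the propositional variables. -/
def VC {Pm : MBParams} (t : NSeq Pm) (n : ℕ) : Set (World t) :=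
  {p | ∃ Γ Δ ts, SubAt t p.val (.node Γ Δ ts) ∧ MBForm.var n ∈ Γ}

/-- `P_C`: the family of all definable sets of worlds of the canonical model. -/
def PC {Pm : MBParams} (t : NSeq Pm) (U : Set ℝ) : Set (Set (World t)) :=
  {X | ∃ A : MBForm Pm, X = MBForm.valR (RCW t U) (VC t) A}



/-! ### Auxiliary lemmas for `EC_is_embedding` -/

theorem get_snoc {Pm : MBParams} :
    ∀ (ts : NSeqs Pm) (lc : MBLab Pm) (uc : NSeq Pm) (i : ℕ) (l : MBLab Pm) (u : NSeq Pm),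
      NSeqs.get ts i = some (l, u) → NSeqs.get (ts.snoc lc uc) i = some (l, u)
  | .nil, _, _, i, _, _, h => by cases i <;> simp [NSeqs.get] at h
  | .cons l' t ts, lc, uc, 0, l, u, h => by
      simp [NSeqs.get] at h
      simp [NSeqs.snoc, NSeqs.get, h.1, h.2]
  | .cons l' t ts, lc, uc, n+1, l, u, h => by
      simp only [NSeqs.get] at h
      simpa [NSeqs.snoc, NSeqs.get] using get_snoc ts lc uc n l u h

theorem get_setSeqs {Pm : MBParams} :
    ∀ (ts : NSeqs Pm) (j : ℕ) (q : List ℕ) (Γq Δq : Finset (MBForm Pm)) (i : ℕ),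
      NSeqs.get (NSeqs.setSeqs ts j q Γq Δq) i =
        if i = j then (NSeqs.get ts i).map (fun lu => (lu.1, lu.2.setSeq q Γq Δq))
        else NSeqs.get ts i
  | .nil, j, q, Γq, Δq, i => by
      cases j <;> cases i <;> simp [NSeqs.setSeqs, NSeqs.get]
  | .cons l t ts, 0, q, Γq, Δq, 0 => by simp [NSeqs.setSeqs, NSeqs.get]
  | .cons l t ts, 0, q, Γq, Δq, n+1 => by simp [NSeqs.setSeqs, NSeqs.get]
  | .cons l t ts, m+1, q, Γq, Δq, 0 => by simp [NSeqs.setSeqs, NSeqs.get]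
  | .cons l t ts, m+1, q, Γq, Δq, n+1 => by
      simp only [NSeqs.setSeqs, NSeqs.get]
      rw [get_setSeqs ts m q Γq Δq n]
      by_cases h : n = m <;> simp [h]

theorem get_addChilds {Pm : MBParams} :
    ∀ (ts : NSeqs Pm) (j : ℕ) (q : List ℕ) (lc : MBLab Pm) (uc : NSeq Pm) (i : ℕ),
      NSeqs.get (NSeqs.addChilds ts j q lc uc) i =
        if i = j then (NSeqs.get ts i).map (fun lu => (lu.1, lu.2.addChild q lc uc))
        else NSeqs.get ts i
  | .nil, j, q, lc, uc, i => by
      cases j <;> cases i <;> simp [NSeqs.addChilds, NSeqs.get]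
  | .cons l t ts, 0, q, lc, uc, 0 => by simp [NSeqs.addChilds, NSeqs.get]
  | .cons l t ts, 0, q, lc, uc, n+1 => by simp [NSeqs.addChilds, NSeqs.get]
  | .cons l t ts, m+1, q, lc, uc, 0 => by simp [NSeqs.addChilds, NSeqs.get]
  | .cons l t ts, m+1, q, lc, uc, n+1 => by
      simp only [NSeqs.addChilds, NSeqs.get]
      rw [get_addChilds ts m q lc uc n]
      by_cases h : n = m <;> simp [h]

/-- The children-extension relation between two nodes. -/
def NodeExt {Pm : MBParams} : NSeq Pm → NSeq Pm → Prop
  | .node _ _ ts, .node _ _ ts' =>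
      ∀ i l u, NSeqs.get ts i = some (l, u) → ∃ u', NSeqs.get ts' i = some (l, u')

theorem NodeExt.rfl {Pm : MBParams} (v : NSeq Pm) : NodeExt v v := by
  cases v with
  | node Γ Δ ts => exact fun i l u h => ⟨u, h⟩

theorem NodeExt.trans {Pm : MBParams} {a b c : NSeq Pm} :
    NodeExt a b → NodeExt b c → NodeExt a c := by
  cases a with | node Γ Δ ts =>
  cases b with | node Γ' Δ' ts' =>
  cases c with | node Γ'' Δ'' ts'' =>
  intro h1 h2 i l u h
  obtain ⟨u', h'⟩ := h1 i l u h
  exact h2 i l u' h'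

/-- Tree extension. -/
def Ext {Pm : MBParams} (t t' : NSeq Pm) : Prop :=
  ∀ p v, SubAt t p v → ∃ v', SubAt t' p v' ∧ NodeExt v v'

theorem Ext.rfl {Pm : MBParams} (t : NSeq Pm) : Ext t t :=
  fun _ v h => ⟨v, h, NodeExt.rfl v⟩

theorem Ext.trans {Pm : MBParams} {a b c : NSeq Pm} (h1 : Ext a b) (h2 : Ext b c) :
    Ext a c := by
  intro p v h
  obtain ⟨v', hv', he'⟩ := h1 p v h
  obtain ⟨v'', hv'', he''⟩ := h2 p v' hv'
  exact ⟨v'', hv'', NodeExt.trans he' he''⟩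

theorem ext_setSeq {Pm : MBParams} (t : NSeq Pm) (q : List ℕ)
    (Γq Δq : Finset (MBForm Pm)) : Ext t (t.setSeq q Γq Δq) := by
  intro p v h
  induction h generalizing q with
  | here t =>
      cases t with | node Γ Δ ts =>
      cases q with
      | nil =>
          exact ⟨.node Γq Δq ts, SubAt.here _, fun i l u h => ⟨u, h⟩⟩
      | cons j q' =>
          refine ⟨.node Γ Δ (NSeqs.setSeqs ts j q' Γq Δq), SubAt.here _, ?_⟩
          intro i l u hget
          rw [get_setSeqs]
          by_cases hij : i = j
          · rw [if_pos hij, hget]; exact ⟨_, rfl⟩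
          · rw [if_neg hij]; exact ⟨u, hget⟩
  | @there Γ₀ Δ₀ ts₀ i₀ l₀ u₀ v p' hget hsub ih =>
      cases q with
      | nil =>
          exact ⟨v, SubAt.there hget hsub, NodeExt.rfl _⟩
      | cons j q' =>
          by_cases hij : i₀ = j
          · subst hij
            obtain ⟨v', hv', he'⟩ := ih q'
            refine ⟨v', SubAt.there (l := l₀) (u := u₀.setSeq q' Γq Δq) ?_ hv', he'⟩
            rw [get_setSeqs, if_pos rfl, hget]
            rfl
          · refine ⟨v, SubAt.there (l := l₀) (u := u₀) ?_ hsub, NodeExt.rfl _⟩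
            rw [get_setSeqs, if_neg hij]
            exact hget

theorem ext_addChild {Pm : MBParams} (t : NSeq Pm) (q : List ℕ)
    (lc : MBLab Pm) (uc : NSeq Pm) : Ext t (t.addChild q lc uc) := by
  intro p v h
  induction h generalizing q with
  | here t =>
      cases t with | node Γ Δ ts =>
      cases q with
      | nil =>
          refine ⟨.node Γ Δ (ts.snoc lc uc), SubAt.here _, ?_⟩
          intro i l u hget
          exact ⟨u, get_snoc ts lc uc i l u hget⟩
      | cons j q' =>
          refine ⟨.node Γ Δ (NSeqs.addChilds ts j q' lc uc), SubAt.here _, ?_⟩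
          intro i l u hget
          rw [get_addChilds]
          by_cases hij : i = j
          · rw [if_pos hij, hget]; exact ⟨_, rfl⟩
          · rw [if_neg hij]; exact ⟨u, hget⟩
  | @there Γ₀ Δ₀ ts₀ i₀ l₀ u₀ v p' hget hsub ih =>
      cases q with
      | nil =>
          exact ⟨v, SubAt.there (get_snoc ts₀ lc uc i₀ l₀ u₀ hget) hsub, NodeExt.rfl _⟩
      | cons j q' =>
          by_cases hij : i₀ = j
          · subst hij
            obtain ⟨v', hv', he'⟩ := ih q'
            refine ⟨v', SubAt.there (l := l₀) (u := u₀.addChild q' lc uc) ?_ hv', he'⟩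
            rw [get_addChilds, if_pos rfl, hget]
            rfl
          · refine ⟨v, SubAt.there (l := l₀) (u := u₀) ?_ hsub, NodeExt.rfl _⟩
            rw [get_addChilds, if_neg hij]
            exact hget

theorem satStep_ext {Pm : MBParams} {a b : NSeq Pm × Set (List ℕ × MBForm Pm)}
    (h : SatStep a b) : Ext a.1 b.1 := by
  cases h <;> first
    | exact ext_setSeq _ _ _ _
    | exact ext_addChild _ _ _ _

theorem reflTrans_ext {Pm : MBParams} {a b : NSeq Pm × Set (List ℕ × MBForm Pm)}
    (h : Relation.ReflTransGen SatStep a b) : Ext a.1 b.1 := by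
  induction h with
  | refl => exact Ext.rfl _
  | tail _ hstep ih => exact ih.trans (satStep_ext hstep)

theorem subAt_append {Pm : MBParams} {t : NSeq Pm} {p : List ℕ}
    {Γ Δ : Finset (MBForm Pm)} {ts : NSeqs Pm} {i : ℕ} {l : MBLab Pm} {u : NSeq Pm}
    (h : SubAt t p (.node Γ Δ ts)) (hget : NSeqs.get ts i = some (l, u)) :
    SubAt t (p ++ [i]) u := by
  generalize hv : (NSeq.node Γ Δ ts : NSeq Pm) = v at h
  revert hv
  induction h with
  | here t => intro hv; subst hv; exact SubAt.there hget (SubAt.here u)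
  | there hg hs ih => intro hv; exact SubAt.there hg (ih hv)

theorem subs?_get {Pm : MBParams} :
    ∀ (ts : NSeqs Pm) (i : ℕ) (l : MBLab Pm) (u : NSeq Pm),
      NSeqs.get ts i = some (l, u) → ∀ p, NSeqs.subs? ts i p = u.sub? p
  | .nil, i, _, _, h => by cases i <;> simp [NSeqs.get] at h
  | .cons l' t ts, 0, l, u, h => by
      simp [NSeqs.get] at h
      simp [NSeqs.subs?, h.2]
  | .cons l' t ts, n+1, l, u, h => by
      simp only [NSeqs.get] at h
      simpa [NSeqs.subs?] using subs?_get ts n l u h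

theorem sub?_of_subAt {Pm : MBParams} {t : NSeq Pm} {p : List ℕ} {v : NSeq Pm}
    (h : SubAt t p v) : t.sub? p = some v := by
  induction h with
  | here t => cases t with | node Γ Δ ts => rfl
  | there hg hs ih => simp [NSeq.sub?, subs?_get _ _ _ _ hg, ih]

theorem suc_gt {U : Set ℝ} (hfin : U.Finite) {α : ℝ} (hα : α < 1) : α < Suc U α := by
  have hS : ((U ∩ Set.Ioi α) ∪ {1} : Set ℝ).Finite :=
    (hfin.inter_of_left _).union (Set.finite_singleton 1)
  have hne : ((U ∩ Set.Ioi α) ∪ {1} : Set ℝ).Nonempty := ⟨1, Or.inr rfl⟩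
  have hmem := hne.csInf_mem hS
  rcases hmem with ⟨_, h2⟩ | h
  · exact h2
  · rw [Suc]; rw [Set.mem_singleton_iff] at h; rw [h]; exact hα

/-- The map `E_C` sending each node of an NSMB-unprovable
nested-sequent to the corresponding node of its saturation is an embedding
into the canonical model: a `[·]^c_α`-child satisfies `α ≤ R_C`, and a
`[·]^o_α`-child satisfies `α < R_C`. -/
theorem EC_is_embedding {Pm : MBParams} (t0 : NSeq Pm)
    (h0 : ¬ Provable true t0) (s : NSeq Pm × Set (List ℕ × MBForm Pm))
    (hre : Relation.ReflTransGen SatStep (t0, (∅ : Set (List ℕ × MBForm Pm))) s)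
    (hsat : Saturated s) (U : Set ℝ) (hU : Interpolated (jset s.1) U) :
    ∀ p Γ Δ ts, SubAt t0 p (.node Γ Δ ts) →
      ∀ i l u, NSeqs.get ts i = some (l, u) →
        IsNode s.1 p ∧ IsNode s.1 (p ++ [i]) ∧
        (l.d = Side.c → l.α ≤ RC s.1 U p (p ++ [i])) ∧
        (l.d = Side.o → l.α < RC s.1 U p (p ++ [i])) := by
  intro p Γ Δ ts hsub i l u hget
  have hext : Ext t0 s.1 := reflTrans_ext hre
  obtain ⟨v', hv', he'⟩ := hext p _ hsub
  cases v' with | node Γ' Δ' ts' =>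
  obtain ⟨u', hget'⟩ := he' i l u hget
  have hnode1 : IsNode s.1 p := ⟨_, hv'⟩
  have hchild : SubAt s.1 (p ++ [i]) u' := subAt_append hv' hget'
  have hnode2 : IsNode s.1 (p ++ [i]) := ⟨_, hchild⟩
  -- label
  have hlab : labelAt s.1 p i = some l := by
    simp [labelAt, sub?_of_subAt hv', hget']
  have hpne : p ≠ p ++ [i] := by
    intro h
    have := congrArg List.length h
    simp at this
  have hRC : RC s.1 U p (p ++ [i]) = max (lval s.1 U p (p ++ [i])) (lval s.1 U (p ++ [i]) p) := by
    rw [RC, if_neg hpne]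
  have hlval : lval s.1 U p (p ++ [i]) =
      (match l.d with | Side.c => l.α | Side.o => Suc U l.α) := by
    rw [lval]
    simp [List.getLast?_concat, List.dropLast_concat, hlab]
  have hle : lval s.1 U p (p ++ [i]) ≤ RC s.1 U p (p ++ [i]) := by
    rw [hRC]; exact le_max_left _ _
  have hα1 : l.α < 1 := lt_of_le_of_ne (Pm.subI l.memJ).2 l.ne_one
  refine ⟨hnode1, hnode2, ?_, ?_⟩
  · intro hd
    have : lval s.1 U p (p ++ [i]) = l.α := by rw [hlval, hd]
    rw [← this]; exact hle
  · intro hd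
    have : lval s.1 U p (p ++ [i]) = Suc U l.α := by rw [hlval, hd]
    calc l.α < Suc U l.α := suc_gt hU.1 hα1
    _ = lval s.1 U p (p ++ [i]) := this.symm
    _ ≤ RC s.1 U p (p ++ [i]) := hle


end MBQL
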